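/- Let p/q be an even rational parameter with p ≥ 2 and core predecessor p̂/q̂, with ω̂ = p̂ + q̂ and tune τ̂. Then κ(p̂/q̂) = 0; equivalently, 3τ̂ < ω̂. -/

import Mathlib

/-- An *even rational parameter* is a fraction `p/q` with `p, q` coprime positive
integers, `p < q`, and `p*q` even. -/
def EvenParam (p q : ℕ) : Prop :=
  Nat.Coprime p q ∧ 0 < p ∧ p < q ∧ Even (p * q)

/-- `τ` is the *tune* of `p/q`: `0 < 2τ < p+q` and `2pτ ≡ ±1 (mod p+q)`. -/
def IsTune (p q τ : ℕ) : Prop :=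
  0 < 2 * τ ∧ 2 * τ < p + q ∧
    (((p : ℤ) + q) ∣ 2 * p * τ - 1 ∨ ((p : ℤ) + q) ∣ 2 * p * τ + 1)

/-- `p'/q'` is the *even predecessor* of `p/q`. -/
def IsEvenPred (p q p' q' : ℕ) : Prop :=
  Nat.Coprime p' q' ∧ p' < q' ∧ Even (p' * q') ∧
    ((p : ℤ) * q' - (q : ℤ) * p').natAbs = 1 ∧ p' + q' < p + q

/-- `κ` is the unique nonnegative integer with `κ/(2κ+1) ≤ τ/(p+q) < (κ+1)/(2κ+3)`. -/
def IsKappa (p q τ κ : ℕ) : Prop :=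
  κ * (p + q) ≤ (2 * κ + 1) * τ ∧ (2 * κ + 3) * τ < (κ + 1) * (p + q)

/-!
Unimodularity `p q' - q p' = ±1` gives `p (p' + q') ≡ ±1 (mod ω)`, so the tune is forced to be
`τ = (ω - ω') / 2` with `ω' = p' + q'`. In these terms `κ` is read off from
`(2κ + 1) ω' ≤ ω < (2κ + 3) ω'`. Subtracting `2κ (p', q')` keeps the pair unimodular with `p'/q'`,
so the same formula gives `2τ̂ = ω̂ - ω'` with `ω̂ = ω - 2κ ω' ∈ [ω', 3ω')`, which is `κ(p̂/q̂) = 0`.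
-/

lemma Nat.Coprime.odd_add_of_even_mul {a b : ℕ} (hab : Nat.Coprime a b) (he : Even (a * b)) :
    Odd (a + b) := by
  by_contra hodd
  have hboth : Even a ∧ Even b := by
    have := Nat.even_add.mp (Nat.not_odd_iff_even.mp hodd)
    rcases Nat.even_mul.mp he with h | h <;> tauto
  have h2 : 2 ∣ Nat.gcd a b := Nat.dvd_gcd hboth.1.two_dvd hboth.2.two_dvd
  rw [hab] at h2
  omega

lemma Int.isCoprime_of_natAbs_det_eq_one {a b c d : ℤ} (h : (a * d - b * c).natAbs = 1) :
    IsCoprime a b := by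
  rcases Int.natAbs_eq_iff.mp h with h | h
  · exact ⟨d, -c, by push_cast at h; linear_combination h⟩
  · exact ⟨-d, c, by push_cast at h; linear_combination -h⟩

lemma Int.dvd_sub_or_dvd_add_of_dvd_mul_sub_one_or_add_one {n a x y : ℤ} (hna : IsCoprime n a)
    (hx : n ∣ a * x - 1 ∨ n ∣ a * x + 1) (hy : n ∣ a * y - 1 ∨ n ∣ a * y + 1) :
    n ∣ x - y ∨ n ∣ x + y := by
  have hmul : n ∣ a * (x - y) ∨ n ∣ a * (x + y) := by
    rcases hx with hx | hx <;> rcases hy with hy | hy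
    · exact Or.inl (by simpa [mul_sub] using dvd_sub hx hy)
    · exact Or.inr (by simpa [mul_add] using dvd_add hx hy)
    · exact Or.inr (by simpa [mul_add] using dvd_add hx hy)
    · exact Or.inl (by simpa [mul_sub] using dvd_sub hx hy)
  exact hmul.imp hna.dvd_of_dvd_mul_left hna.dvd_of_dvd_mul_left

lemma dvd_mul_add_sub_one_or_add_one_of_natAbs_det_eq_one {p q p' q' : ℕ}
    (hdet : ((p : ℤ) * q' - q * p').natAbs = 1) :
    ((p : ℤ) + q) ∣ p * (p' + q' : ℕ) - 1 ∨ ((p : ℤ) + q) ∣ p * (p' + q' : ℕ) + 1 := by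
  rcases Int.natAbs_eq_iff.mp hdet with h | h
  · exact Or.inl ⟨p', by push_cast at h ⊢; linear_combination h⟩
  · exact Or.inr ⟨p', by push_cast at h ⊢; linear_combination h⟩

lemma IsTune.two_mul_add_eq {p q τ p' q' : ℕ} (hτ : IsTune p q τ)
    (hdet : ((p : ℤ) * q' - q * p').natAbs = 1) (hodd : Odd (p' + q')) (hle : p' + q' ≤ p + q) :
    2 * τ + (p' + q') = p + q := by
  obtain ⟨hpos, hlt, hτdvd⟩ := hτ
  have hcop : IsCoprime ((p : ℤ) + q) p := by
    simpa [add_comm] using (Int.isCoprime_of_natAbs_det_eq_one hdet).symm.add_mul_left_left 1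
  have hτdvd' : ((p : ℤ) + q) ∣ p * (2 * τ : ℕ) - 1 ∨ ((p : ℤ) + q) ∣ p * (2 * τ : ℕ) + 1 := by
    push_cast
    rwa [show (p : ℤ) * (2 * τ) = 2 * p * τ by ring]
  obtain ⟨k, hk⟩ := hodd
  rcases Int.dvd_sub_or_dvd_add_of_dvd_mul_sub_one_or_add_one hcop hτdvd'
    (dvd_mul_add_sub_one_or_add_one_of_natAbs_det_eq_one hdet) with hsub | hadd
  · have : ((2 * τ : ℕ) : ℤ) - (p' + q' : ℕ) = 0 :=
      Int.eq_zero_of_abs_lt_dvd hsub (by rw [abs_lt]; push_cast; omega)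
    omega
  · have : ((2 * τ : ℕ) : ℤ) + (p' + q' : ℕ) - (p + q) = 0 :=
      Int.eq_zero_of_abs_lt_dvd (dvd_sub hadd dvd_rfl) (by rw [abs_lt]; push_cast; omega)
    omega

lemma isKappa_iff_of_two_mul_add_eq {p q τ κ w : ℕ} (hw : 2 * τ + w = p + q) :
    IsKappa p q τ κ ↔ (2 * κ + 1) * w ≤ p + q ∧ p + q < (2 * κ + 3) * w := by
  unfold IsKappa
  rw [← hw]
  constructor <;> rintro ⟨h1, h2⟩ <;> constructor <;> nlinarith

theorem corePred_kappa_zero_general (p q τ κ p' q' phat qhat tauhat : ℕ)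
    (hτ : IsTune p q τ) (hκ : IsKappa p q τ κ)
    (hpred : IsEvenPred p q p' q')
    (hphat : phat + 2 * κ * p' = p) (hqhat : qhat + 2 * κ * q' = q)
    (htauhat : IsTune phat qhat tauhat) :
    IsKappa phat qhat tauhat 0 ∧ 3 * tauhat < phat + qhat := by
  obtain ⟨hcop', -, heven', hdet, hlt⟩ := hpred
  have hodd : Odd (p' + q') := hcop'.odd_add_of_even_mul heven'
  obtain ⟨hlo, hhi⟩ := (isKappa_iff_of_two_mul_add_eq (hτ.two_mul_add_eq hdet hodd hlt.le)).mp hκ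
  have hsum : phat + qhat + 2 * κ * (p' + q') = p + q := by rw [← hphat, ← hqhat]; ring
  have hdet_hat : ((phat : ℤ) * q' - qhat * p').natAbs = 1 := by
    rwa [show (phat : ℤ) * q' - qhat * p' = p * q' - q * p' by
      rw [← hphat, ← hqhat]; push_cast; ring]
  have hω_hat := htauhat.two_mul_add_eq hdet_hat hodd (by nlinarith)
  have hκ_hat : IsKappa phat qhat tauhat 0 :=
    (isKappa_iff_of_two_mul_add_eq hω_hat).mpr ⟨by nlinarith, by nlinarith⟩
  exact ⟨hκ_hat, by simpa using hκ_hat.2⟩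

/-- the core predecessor has κ = 0, equivalently 3τ̂ < ω̂. -/
theorem corePred_kappa_zero (p q τ κ p' q' phat qhat tauhat : ℕ)
    (h : EvenParam p q) (hp2 : 2 ≤ p)
    (hτ : IsTune p q τ) (hκ : IsKappa p q τ κ)
    (hpred : IsEvenPred p q p' q')
    (hphat : phat + 2 * κ * p' = p) (hqhat : qhat + 2 * κ * q' = q)
    (htauhat : IsTune phat qhat tauhat) :
    IsKappa phat qhat tauhat 0 ∧ 3 * tauhat < phat + qhat :=
  corePred_kappa_zero_general p q τ κ p' q' phat qhat tauhat hτ hκ hpred hphat hqhat htauhat
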